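/- Let ∇ be a real m×N matrix whose null space is exactly the span of the all-ones vector 1 ∈ ℝ^N, let A be a symmetric positive definite m×m real matrix, and set C = ∇ᵀ A ∇. Let S be any nonempty finite set of indices in {1,…,N}, and let C_S be the matrix obtained from C by successively applying, for each i ∈ S, the masking operation that sets the i-th row and i-th column to zero and the (i,i) diagonal entry to 1. Then C_S is symmetric positive definite. (This is the paper's main theorem that the boundary-conditioned linear systems C_u, C_v, C_w are SPD.) -/

import Mathlib

/-!
Write `u` for `x` with its `i`-th entry replaced by `0`. The quadratic form of the masked matrix
is `xᵀ (M masked at i) x = uᵀ M u + (x i)²`, so masking at `i` yields a positive definite matrix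
as soon as `M` is symmetric and positive on nonzero vectors vanishing at `i`. A positive definite
matrix has this property, and so does `C = ∇ᵀ A ∇`: a nonzero `u` with `u i = 0` is not a multiple
of `1`, hence `∇ u ≠ 0` and `uᵀ C u = (∇ u)ᵀ A (∇ u) > 0`. So the first masking makes `C`
positive definite, and every later masking preserves this.
-/

open Matrix

def maskMatrix {N : ℕ} (M : Matrix (Fin N) (Fin N) ℝ) (i : Fin N) :
    Matrix (Fin N) (Fin N) ℝ :=
  Matrix.of fun k l =>
    if k = i ∧ l = i then 1 else if k = i ∨ l = i then 0 else M k l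

theorem dotProduct_update_right {ι : Type*} [Fintype ι] [DecidableEq ι] (x v : ι → ℝ) (i : ι)
    (a : ℝ) : x ⬝ᵥ Function.update v i a = Function.update x i 0 ⬝ᵥ v + x i * a := by
  simp only [dotProduct, Function.update_apply,
    ← Finset.add_sum_erase _ _ (Finset.mem_univ i), if_pos, zero_mul, zero_add]
  rw [add_comm]
  congr 1
  refine Finset.sum_congr rfl fun k hk => ?_
  simp [Finset.ne_of_mem_erase hk]

namespace Matrix

variable {N : ℕ} {M : Matrix (Fin N) (Fin N) ℝ}

theorem maskMatrix_mulVec (M : Matrix (Fin N) (Fin N) ℝ) (i : Fin N) (x : Fin N → ℝ) :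
    maskMatrix M i *ᵥ x = Function.update (M *ᵥ Function.update x i 0) i (x i) := by
  ext k
  rcases eq_or_ne k i with rfl | hk
  · simp [maskMatrix, mulVec, dotProduct]
  · simp only [maskMatrix, mulVec, dotProduct, of_apply, Function.update_of_ne hk, hk]
    refine Finset.sum_congr rfl fun l _ => ?_
    rcases eq_or_ne l i with rfl | hl <;> simp [*]

theorem dotProduct_maskMatrix_mulVec (M : Matrix (Fin N) (Fin N) ℝ) (i : Fin N)
    (x : Fin N → ℝ) :
    x ⬝ᵥ (maskMatrix M i *ᵥ x) =
      Function.update x i 0 ⬝ᵥ (M *ᵥ Function.update x i 0) + x i * x i := by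
  rw [maskMatrix_mulVec, dotProduct_update_right]

theorem IsHermitian.maskMatrix (hM : M.IsHermitian) (i : Fin N) :
    (maskMatrix M i).IsHermitian := by
  ext k l
  simp only [conjTranspose_apply, star_trivial, _root_.maskMatrix, of_apply,
    and_comm (a := l = i), or_comm (a := l = i)]
  split_ifs <;> first | rfl | exact hM.apply k l

theorem posDef_maskMatrix_of_dotProduct_mulVec_pos (hM : M.IsHermitian) (i : Fin N)
    (hpos : ∀ x : Fin N → ℝ, x ≠ 0 → x i = 0 → 0 < x ⬝ᵥ (M *ᵥ x)) :
    (maskMatrix M i).PosDef := by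
  refine PosDef.of_dotProduct_mulVec_pos (hM.maskMatrix i) fun x hx => ?_
  rw [star_trivial, dotProduct_maskMatrix_mulVec]
  by_cases hu : Function.update x i 0 = 0
  · have hxi : x i ≠ 0 := fun hxi => hx (by rwa [← hxi, Function.update_eq_self] at hu)
    rw [hu, mulVec_zero, dotProduct_zero, zero_add]
    exact mul_self_pos.mpr hxi
  · exact add_pos_of_pos_of_nonneg (hpos _ hu (Function.update_self ..)) (mul_self_nonneg _)

theorem PosDef.maskMatrix (hM : M.PosDef) (i : Fin N) : (maskMatrix M i).PosDef :=
  posDef_maskMatrix_of_dotProduct_mulVec_pos hM.isHermitian i fun x hx _ => by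
    simpa using hM.dotProduct_mulVec_pos hx

theorem PosDef.foldl_maskMatrix (hM : M.PosDef) (l : List (Fin N)) :
    (l.foldl _root_.maskMatrix M).PosDef := by
  induction l generalizing M with
  | nil => exact hM
  | cons i l ih => exact ih (hM.maskMatrix i)

theorem posDef_maskMatrix_transpose_mul_mul {ι : Type*} [Fintype ι]
    (grad : Matrix ι (Fin N) ℝ)
    (hker : ∀ x : Fin N → ℝ, grad *ᵥ x = 0 → ∃ c : ℝ, x = c • (fun _ => (1 : ℝ)))
    {A : Matrix ι ι ℝ} (hA : A.PosDef) (i : Fin N) :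
    (maskMatrix (gradᵀ * A * grad) i).PosDef := by
  have hC : (gradᵀ * A * grad).IsHermitian := by
    simpa [conjTranspose_eq_transpose_of_trivial] using
      isHermitian_conjTranspose_mul_mul grad hA.isHermitian
  refine posDef_maskMatrix_of_dotProduct_mulVec_pos hC i fun x hx hxi => ?_
  have hgrad : grad *ᵥ x ≠ 0 := fun h => by
    obtain ⟨c, rfl⟩ := hker x h
    obtain rfl : c = 0 := by simpa using hxi
    exact hx (zero_smul ℝ _)
  calc 0 < (grad *ᵥ x) ⬝ᵥ (A *ᵥ (grad *ᵥ x)) := by simpa using hA.dotProduct_mulVec_pos hgrad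
    _ = x ⬝ᵥ ((gradᵀ * A * grad) *ᵥ x) := by
      rw [← mulVec_mulVec, ← mulVec_mulVec, dotProduct_mulVec x gradᵀ, vecMul_transpose]

end Matrix

theorem successive_masking_posDef_general
    {m N : ℕ}
    (grad : Matrix (Fin m) (Fin N) ℝ)
    (hker : ∀ x : Fin N → ℝ, grad.mulVec x = 0 ↔ ∃ c : ℝ, x = c • (fun _ => (1 : ℝ)))
    (A : Matrix (Fin m) (Fin m) ℝ) (hA : A.PosDef)
    (S : Finset (Fin N)) (hS : S.Nonempty)
    (l : List (Fin N)) (hlS : l.toFinset = S) :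
    (l.foldl maskMatrix (gradᵀ * A * grad)).PosDef := by
  obtain ⟨i, l, rfl⟩ := List.exists_cons_of_ne_nil (l := l) (by rintro rfl; simp [← hlS] at hS)
  exact (posDef_maskMatrix_transpose_mul_mul grad (fun x => (hker x).mp) hA i).foldl_maskMatrix l

/-- Let `∇` be a real `m × N` matrix whose null space is the span of the
all-ones vector, `A` a symmetric positive definite `m × m` matrix, and `C = ∇ᵀ A ∇`. For any
nonempty set `S` of indices, the matrix obtained from `C` by successively masking at each
index of `S` is symmetric positive definite. -/
theorem successive_masking_posDef
    {m N : ℕ} (hN : 0 < N)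
    (grad : Matrix (Fin m) (Fin N) ℝ)
    (hker : ∀ x : Fin N → ℝ, grad.mulVec x = 0 ↔ ∃ c : ℝ, x = c • (fun _ => (1 : ℝ)))
    (A : Matrix (Fin m) (Fin m) ℝ) (hA : A.PosDef)
    (S : Finset (Fin N)) (hS : S.Nonempty)
    (l : List (Fin N)) (hl : l.Nodup) (hlS : l.toFinset = S) :
    (l.foldl maskMatrix (gradᵀ * A * grad)).PosDef :=
  successive_masking_posDef_general grad hker A hA S hS l hlS
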